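/- For x > 0, (x-1)/log x = ∫_0^1 (x/((1-t)x+t)) · g(t) dt, where g(t) = 1/( t(1-t)(π² + (log(t/(1-t)))²) ). (Left side interpreted as 1 when x = 1.) -/

import Mathlib

/-!
The logarithmic mean is `∫₀¹ x ^ u du`. For `0 < u < 1` the substitution
`t = x r / (1 + (x - 1) r)` and the reflection formula `B(u, 1 - u) = π / sin (π u)` give
`x ^ u = ∫₀¹ (1 !_t x) · sin (π u) / π · t ^ (u - 1) (1 - t) ^ (-u) dt`. Everything is
nonnegative, so the two integrals may be swapped, and the `u`-integral is elementary:
with `c = log (t / (1 - t))` it is `∫₀¹ e^{c u} sin (π u) du / (π t) = g t`.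
-/

open Real MeasureTheory Set

theorem integral_integral_swap_of_nonneg {α β : Type*} [MeasurableSpace α] [MeasurableSpace β]
    {μ : Measure α} {ν : Measure β} [SFinite μ] [SFinite ν] {F : α → β → ℝ}
    (hF : AEStronglyMeasurable (Function.uncurry F) (μ.prod ν))
    (hF_nonneg : ∀ᵐ x ∂μ, ∀ᵐ y ∂ν, 0 ≤ F x y)
    (hF_sec : ∀ᵐ x ∂μ, Integrable (F x) ν)
    (hF_int : Integrable (fun x ↦ ∫ y, F x y ∂ν) μ) :
    ∫ x, ∫ y, F x y ∂ν ∂μ = ∫ y, ∫ x, F x y ∂μ ∂ν := by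
  refine integral_integral_swap ((integrable_prod_iff hF).2 ⟨hF_sec, hF_int.congr ?_⟩)
  filter_upwards [hF_nonneg] with x hx
  refine integral_congr_ae ?_
  filter_upwards [hx] with y hy
  simp [abs_of_nonneg hy]

lemma ofReal_rpow_mul_one_sub_rpow {a b t : ℝ} (ht : t ∈ Icc (0:ℝ) 1) :
    (((t ^ (a - 1) * (1 - t) ^ (b - 1) : ℝ)) : ℂ) =
      (t : ℂ) ^ ((a : ℂ) - 1) * (1 - (t : ℂ)) ^ ((b : ℂ) - 1) := by
  rw [Complex.ofReal_mul, Complex.ofReal_cpow ht.1, Complex.ofReal_cpow (sub_nonneg.2 ht.2)]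
  push_cast; rfl

theorem integrableOn_rpow_mul_one_sub_rpow {a b : ℝ} (ha : 0 < a) (hb : 0 < b) :
    IntegrableOn (fun t : ℝ ↦ t ^ (a - 1) * (1 - t) ^ (b - 1)) (Ioo 0 1) := by
  have h := (Complex.betaIntegral_convergent (u := a) (v := b) (by simpa) (by simpa)).1.re
  refine (IntegrableOn.mono_set h Ioo_subset_Ioc_self).congr_fun (fun t ht ↦ ?_) measurableSet_Ioo
  simp only [← ofReal_rpow_mul_one_sub_rpow (Ioo_subset_Icc_self ht), RCLike.re_to_complex,
    Complex.ofReal_re]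

theorem integral_rpow_mul_one_sub_rpow {a b : ℝ} (ha : 0 < a) (hb : 0 < b) :
    ∫ t in Ioo 0 1, t ^ (a - 1) * (1 - t) ^ (b - 1) = Gamma a * Gamma b / Gamma (a + b) := by
  rw [← integral_Ioc_eq_integral_Ioo, ← intervalIntegral.integral_of_le zero_le_one]
  have h := Complex.betaIntegral_eq_Gamma_mul_div a b (by simpa) (by simpa)
  rw [Complex.betaIntegral, ← Complex.ofReal_add, Complex.Gamma_ofReal, Complex.Gamma_ofReal,
    Complex.Gamma_ofReal] at h
  apply Complex.ofReal_injective
  push_cast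
  rw [← h, ← intervalIntegral.integral_ofReal]
  refine intervalIntegral.integral_congr fun t ht ↦ ?_
  rw [uIcc_of_le zero_le_one] at ht
  exact ofReal_rpow_mul_one_sub_rpow ht

theorem integral_rpow_mul_one_sub_rpow_neg {u : ℝ} (h0 : 0 < u) (h1 : u < 1) :
    ∫ t in Ioo 0 1, t ^ (u - 1) * (1 - t) ^ (-u) = π / sin (π * u) := by
  have := integral_rpow_mul_one_sub_rpow h0 (sub_pos.2 h1)
  rwa [sub_sub_cancel_left, add_sub_cancel, Gamma_one, div_one, Gamma_mul_Gamma_one_sub] at this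

theorem integral_exp_mul_mul_sin_pi_mul (a : ℝ) :
    ∫ u in (0:ℝ)..1, exp (a * u) * sin (π * u) = π * (exp a + 1) / (a ^ 2 + π ^ 2) := by
  have hderiv : ∀ u ∈ uIcc (0:ℝ) 1, HasDerivAt
      (fun u ↦ exp (a * u) * (a * sin (π * u) - π * cos (π * u)) / (a ^ 2 + π ^ 2))
      (exp (a * u) * sin (π * u)) u := by
    intro u _
    have h1 : HasDerivAt (fun u ↦ exp (a * u)) (exp (a * u) * a) u := by
      simpa using ((hasDerivAt_id u).const_mul a).exp
    have h2 : HasDerivAt (fun u ↦ sin (π * u)) (cos (π * u) * π) u := by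
      simpa using ((hasDerivAt_id u).const_mul π).sin
    have h3 : HasDerivAt (fun u ↦ cos (π * u)) (-sin (π * u) * π) u := by
      simpa using ((hasDerivAt_id u).const_mul π).cos
    refine ((h1.mul ((h2.const_mul a).sub (h3.const_mul π))).div_const _).congr_deriv ?_
    simp only [Pi.sub_apply]
    field_simp
    ring
  rw [intervalIntegral.integral_eq_sub_of_hasDerivAt hderiv
    (Continuous.intervalIntegrable (by fun_prop) _ _)]
  simp only [mul_one, mul_zero, exp_zero, sin_pi, cos_pi, sin_zero, cos_zero]
  ring

theorem integral_const_rpow_zero_one {x : ℝ} (hx : 0 < x) :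
    ∫ u in (0:ℝ)..1, x ^ u = if x = 1 then 1 else (x - 1) / log x := by
  split_ifs with h
  · simp [h]
  have hlog : log x ≠ 0 := log_ne_zero_of_pos_of_ne_one hx h
  simp_rw [rpow_def_of_pos hx]
  rw [intervalIntegral.integral_comp_mul_left (fun u ↦ exp u) hlog, integral_exp]
  simp [exp_log hx, div_eq_inv_mul]

noncomputable def unitMobius (x r : ℝ) : ℝ := x * r / (1 + (x - 1) * r)

section UnitMobius

variable {x : ℝ}

lemma unitMobius_denom_pos (hx : 0 < x) {r : ℝ} (hr : r ∈ Icc (0:ℝ) 1) :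
    0 < 1 + (x - 1) * r := by
  nlinarith [mul_nonneg hx.le hr.1, hr.2]

lemma one_sub_unitMobius (hx : 0 < x) {r : ℝ} (hr : r ∈ Icc (0:ℝ) 1) :
    1 - unitMobius x r = (1 - r) / (1 + (x - 1) * r) := by
  have := (unitMobius_denom_pos hx hr).ne'
  rw [unitMobius, eq_div_iff this, sub_mul, div_mul_cancel₀ _ this]; ring

lemma mapsTo_unitMobius (hx : 0 < x) : MapsTo (unitMobius x) (Ioo 0 1) (Ioo 0 1) := by
  intro r hr
  have hD := unitMobius_denom_pos hx (Ioo_subset_Icc_self hr)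
  refine ⟨div_pos (mul_pos hx hr.1) hD, ?_⟩
  rw [unitMobius, div_lt_one hD]; nlinarith [hr.2]

lemma image_unitMobius (hx : 0 < x) : unitMobius x '' Ioo 0 1 = Ioo 0 1 := by
  refine (mapsTo_unitMobius hx).image_subset.antisymm fun t ht ↦ ?_
  have hD : 0 < x * (1 - t) + t := by nlinarith [ht.1, ht.2]
  refine ⟨t / (x * (1 - t) + t),
    ⟨div_pos ht.1 hD, (div_lt_one hD).2 (by nlinarith [ht.2])⟩, ?_⟩
  have hD' : 1 + (x - 1) * (t / (x * (1 - t) + t)) = x / (x * (1 - t) + t) := by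
    field_simp; ring
  rw [unitMobius, hD']
  field_simp

lemma injOn_unitMobius (hx : 0 < x) : InjOn (unitMobius x) (Ioo 0 1) := by
  intro r hr s hs h
  have hDr := unitMobius_denom_pos hx (Ioo_subset_Icc_self hr)
  have hDs := unitMobius_denom_pos hx (Ioo_subset_Icc_self hs)
  rw [unitMobius, unitMobius, div_eq_div_iff hDr.ne' hDs.ne'] at h
  nlinarith

lemma hasDerivAt_unitMobius (hx : 0 < x) {r : ℝ} (hr : r ∈ Icc (0:ℝ) 1) :
    HasDerivAt (unitMobius x) (x / (1 + (x - 1) * r) ^ 2) r := by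
  have hD := unitMobius_denom_pos hx hr
  refine (((hasDerivAt_id r).const_mul x).div
    (((hasDerivAt_id r).const_mul (x - 1)).const_add 1) hD.ne').congr_deriv ?_
  simp only [id_eq]; ring

lemma abs_deriv_unitMobius_smul (hx : 0 < x) (f : ℝ → ℝ) {r : ℝ}
    (hr : r ∈ Ioo (0:ℝ) 1) :
    |x / (1 + (x - 1) * r) ^ 2| • f (unitMobius x r) =
      x / (1 + (x - 1) * r) ^ 2 * f (unitMobius x r) := by
  have hD := unitMobius_denom_pos hx (Ioo_subset_Icc_self hr)
  rw [smul_eq_mul, abs_of_pos (by positivity)]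

theorem integral_Ioo_comp_unitMobius (hx : 0 < x) (f : ℝ → ℝ) :
    ∫ t in Ioo 0 1, f t = ∫ r in Ioo 0 1, x / (1 + (x - 1) * r) ^ 2 * f (unitMobius x r) := by
  have h := integral_image_eq_integral_abs_deriv_smul measurableSet_Ioo
    (fun r hr ↦ (hasDerivAt_unitMobius hx (Ioo_subset_Icc_self hr)).hasDerivWithinAt)
    (injOn_unitMobius hx) f
  rw [image_unitMobius hx] at h
  exact h.trans (setIntegral_congr_fun measurableSet_Ioo fun r ↦ abs_deriv_unitMobius_smul hx f)

theorem integrableOn_Ioo_comp_unitMobius_iff (hx : 0 < x) {f : ℝ → ℝ} :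
    IntegrableOn f (Ioo 0 1) ↔
      IntegrableOn (fun r ↦ x / (1 + (x - 1) * r) ^ 2 * f (unitMobius x r)) (Ioo 0 1) := by
  have h := integrableOn_image_iff_integrableOn_abs_deriv_smul measurableSet_Ioo
    (fun r hr ↦ (hasDerivAt_unitMobius hx (Ioo_subset_Icc_self hr)).hasDerivWithinAt)
    (injOn_unitMobius hx) f
  rw [image_unitMobius hx] at h
  exact h.trans
    (integrableOn_congr_fun (fun r ↦ abs_deriv_unitMobius_smul hx f) measurableSet_Ioo)

end UnitMobius

/-- With `D = 1 + (x - 1) * r` and `t = unitMobius x r`: `1 !_t x = D`, the Jacobian is `x / D ^ 2`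
and the Beta kernel gains the factor `x ^ (u - 1) * D`, so only `x ^ u` survives. -/
lemma jacobian_mul_integrand_unitMobius {x u r : ℝ} (hx : 0 < x) (hr : r ∈ Ioo (0:ℝ) 1) :
    x / (1 + (x - 1) * r) ^ 2 * (x / ((1 - unitMobius x r) * x + unitMobius x r) *
      (unitMobius x r ^ (u - 1) * (1 - unitMobius x r) ^ (-u))) =
      x ^ u * (r ^ (u - 1) * (1 - r) ^ (-u)) := by
  have hD := unitMobius_denom_pos hx (Ioo_subset_Icc_self hr)
  have h1φ := one_sub_unitMobius hx (Ioo_subset_Icc_self hr)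
  have hφ : unitMobius x r = x * r / (1 + (x - 1) * r) := rfl
  set D := 1 + (x - 1) * r
  have hmean : (1 - unitMobius x r) * x + unitMobius x r = x / D := by
    rw [h1φ, hφ]; field_simp; ring
  rw [hmean, h1φ, hφ, div_rpow (mul_pos hx hr.1).le hD.le, div_rpow (sub_pos.2 hr.2).le hD.le,
    mul_rpow hx.le hr.1.le, rpow_sub_one hx.ne', rpow_sub_one hD.ne', rpow_neg hD.le]
  have := rpow_pos_of_pos hD u
  field_simp

/-- Density of the measure `μ_u` on `[0, 1]` with `x ^ u = ∫ (1 !_t x) dμ_u(t)`, `0 < u < 1`. -/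
noncomputable def rpowDensity (u t : ℝ) : ℝ :=
  sin (π * u) / π * (t ^ (u - 1) * (1 - t) ^ (-u))

noncomputable def logMeanDensity (t : ℝ) : ℝ :=
  1 / (t * (1 - t) * (π ^ 2 + log (t / (1 - t)) ^ 2))

lemma rpowDensity_nonneg {u t : ℝ} (hu : u ∈ Icc (0:ℝ) 1) (ht : t ∈ Icc (0:ℝ) 1) :
    0 ≤ rpowDensity u t := by
  have hsin : 0 ≤ sin (π * u) :=
    sin_nonneg_of_nonneg_of_le_pi (by nlinarith [pi_pos, hu.1]) (by nlinarith [pi_pos, hu.2])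
  unfold rpowDensity
  have := rpow_nonneg ht.1 (u - 1)
  have := rpow_nonneg (sub_nonneg.2 ht.2) (-u)
  positivity

theorem integral_rpowDensity {t : ℝ} (ht : t ∈ Ioo (0:ℝ) 1) :
    ∫ u in Ioo 0 1, rpowDensity u t = logMeanDensity t := by
  have h1t : 0 < 1 - t := sub_pos.2 ht.2
  have hexp : exp (log (t / (1 - t))) = t / (1 - t) := exp_log (div_pos ht.1 h1t)
  have hdens : ∀ u, rpowDensity u t =
      1 / (π * t) * (exp (log (t / (1 - t)) * u) * sin (π * u)) := by
    intro u
    rw [rpowDensity, ← rpow_def_of_pos (div_pos ht.1 h1t), div_rpow ht.1.le h1t.le,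
      rpow_sub_one ht.1.ne', rpow_neg h1t.le]
    have := rpow_pos_of_pos h1t u
    field_simp
  simp_rw [hdens]
  rw [integral_const_mul, ← integral_Ioc_eq_integral_Ioo,
    ← intervalIntegral.integral_of_le zero_le_one, integral_exp_mul_mul_sin_pi_mul, hexp,
    logMeanDensity]
  field_simp
  ring

theorem integral_mul_rpow_mul_one_sub_rpow_neg {x u : ℝ} (hx : 0 < x) (hu0 : 0 < u)
    (hu1 : u < 1) :
    ∫ t in Ioo 0 1, x / ((1 - t) * x + t) * (t ^ (u - 1) * (1 - t) ^ (-u)) =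
      x ^ u * (π / sin (π * u)) := by
  rw [integral_Ioo_comp_unitMobius hx, setIntegral_congr_fun measurableSet_Ioo
    fun r hr ↦ jacobian_mul_integrand_unitMobius hx hr, integral_const_mul,
    integral_rpow_mul_one_sub_rpow_neg hu0 hu1]

theorem integrableOn_mul_rpow_mul_one_sub_rpow_neg {x u : ℝ} (hx : 0 < x) (hu0 : 0 < u)
    (hu1 : u < 1) :
    IntegrableOn (fun t ↦ x / ((1 - t) * x + t) * (t ^ (u - 1) * (1 - t) ^ (-u))) (Ioo 0 1) := by
  rw [integrableOn_Ioo_comp_unitMobius_iff hx, integrableOn_congr_fun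
    (fun r hr ↦ jacobian_mul_integrand_unitMobius hx hr) measurableSet_Ioo]
  have := integrableOn_rpow_mul_one_sub_rpow hu0 (sub_pos.2 hu1)
  rw [sub_sub_cancel_left] at this
  exact this.const_mul _

theorem integral_mul_rpowDensity {x u : ℝ} (hx : 0 < x) (hu0 : 0 < u) (hu1 : u < 1) :
    ∫ t in Ioo 0 1, x / ((1 - t) * x + t) * rpowDensity u t = x ^ u := by
  have hsin : sin (π * u) ≠ 0 :=
    (sin_pos_of_pos_of_lt_pi (by positivity) (by nlinarith [pi_pos])).ne'
  simp_rw [rpowDensity, mul_left_comm _ (sin (π * u) / π)]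
  rw [integral_const_mul, integral_mul_rpow_mul_one_sub_rpow_neg hx hu0 hu1]
  field_simp

theorem integral_integral_swap_mul_rpowDensity {x : ℝ} (hx : 0 < x) :
    ∫ u in Ioo 0 1, ∫ t in Ioo 0 1, x / ((1 - t) * x + t) * rpowDensity u t =
      ∫ t in Ioo 0 1, ∫ u in Ioo 0 1, x / ((1 - t) * x + t) * rpowDensity u t := by
  refine integral_integral_swap_of_nonneg (by unfold rpowDensity; fun_prop) ?_ ?_ ?_
  · refine ae_restrict_of_forall_mem measurableSet_Ioo fun u hu ↦
      ae_restrict_of_forall_mem measurableSet_Ioo fun t ht ↦ ?_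
    have : 0 < (1 - t) * x + t := by nlinarith [ht.1, ht.2]
    exact mul_nonneg (by positivity)
      (rpowDensity_nonneg (Ioo_subset_Icc_self hu) (Ioo_subset_Icc_self ht))
  · refine ae_restrict_of_forall_mem measurableSet_Ioo fun u hu ↦ ?_
    simp_rw [rpowDensity, mul_left_comm _ (sin (π * u) / π)]
    exact (integrableOn_mul_rpow_mul_one_sub_rpow_neg hx hu.1 hu.2).const_mul _
  · refine (integrableOn_congr_fun (fun u hu ↦ (integral_mul_rpowDensity hx hu.1 hu.2).symm)
      measurableSet_Ioo).1 ?_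
    exact (continuous_const.rpow continuous_id fun _ ↦ Or.inl hx.ne').integrableOn_Icc.mono_set
      Ioo_subset_Icc_self

theorem logarithmic_mean_assoc_measure_density (x : ℝ) (hx : 0 < x) :
    (if x = 1 then (1:ℝ) else (x - 1) / Real.log x) =
      ∫ t in (0:ℝ)..1, (x / ((1 - t) * x + t)) *
        (1 / (t * (1 - t) * (π ^ 2 + (Real.log (t / (1 - t))) ^ 2))) := by
  rw [← integral_const_rpow_zero_one hx]
  simp only [intervalIntegral.integral_of_le zero_le_one, integral_Ioc_eq_integral_Ioo]
  calc ∫ u in Ioo 0 1, x ^ u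
      = ∫ u in Ioo 0 1, ∫ t in Ioo 0 1, x / ((1 - t) * x + t) * rpowDensity u t :=
        setIntegral_congr_fun measurableSet_Ioo fun u hu ↦
          (integral_mul_rpowDensity hx hu.1 hu.2).symm
    _ = ∫ t in Ioo 0 1, ∫ u in Ioo 0 1, x / ((1 - t) * x + t) * rpowDensity u t :=
        integral_integral_swap_mul_rpowDensity hx
    _ = ∫ t in Ioo 0 1, x / ((1 - t) * x + t) * logMeanDensity t :=
        setIntegral_congr_fun measurableSet_Ioo fun t ht ↦ by
          rw [integral_const_mul, integral_rpowDensity ht]
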